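/- Let n, m ≥ 1, A ∈ ℝ^{n×n}, B ∈ ℝ^{n×m}, K₀ ∈ ℝ^{m×n}, and let constants η > 0, σ_w, σ_v with 0 ≤ σ_w ≤ 1, 0 ≤ σ_v ≤ 1, σ_w² ≤ 5η², σ_v² ≤ 5η², C ≥ 1 and 0 ≤ ρ < 1 be such that for all integers τ ≥ 0 (spectral norm |||·|||): |||(A+BK₀)^τ||| ≤ Cρ^τ, |||(A+BK₀)^τB||| ≤ Cρ^τ, |||K₀(A+BK₀)^τ||| ≤ Cρ^τ, |||K₀(A+BK₀)^τB||| ≤ Cρ^τ. Define Q* = Σ_{τ=0}^∞ (A+BK₀)^τ(σ_w²I+σ_v²BBᵀ)((A+BK₀)ᵀ)^τ and M* = [[Q*, Q*K₀ᵀ],[K₀Q*, K₀Q*K₀ᵀ+σ_v²I]] ∈ ℝ^{(n+m)×(n+m)}. Then the spectral norm of M* satisfies |||M*||| ≤ 85·C²η²/(1−ρ). -/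

import Mathlib

/-!
Put `P = A + BK`, `Σ = σw² I + σv² BBᵀ` and `E = [I; K]`. Then
`M* = E Q* Eᵀ + diag(0, σv² I)` and `E Q* Eᵀ = ∑ τ, (E P^τ) Σ (E P^τ)ᵀ`. Since
`‖[X; Y]‖² ≤ ‖X‖² + ‖Y‖²`, the hypotheses give `‖E P^τ‖², ‖E P^τ B‖² ≤ 2 C² ρ^τ`, so the
`τ`-th term has norm at most
`2 (σw² + σv²) C² ρ^τ ≤ 20 C² η² ρ^τ`. Summing the geometric series and adding
`σv² ≤ 5 η² ≤ 5 C² η² / (1 - ρ)` bounds `‖M*‖` by `25 C² η² / (1 - ρ)`.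
-/

open MeasureTheory Matrix Filter
open scoped ENNReal

noncomputable section

/-- The spectral norm (induced 2-norm) of a real matrix. -/
def specNorm {α β : Type*} [Fintype α] [Fintype β] [DecidableEq β]
    (M : Matrix α β ℝ) : ℝ :=
  ‖LinearMap.toContinuousLinearMap (Matrix.toEuclideanLin M)‖

/-- The induced `∞`-norm (maximum absolute row sum) of a real matrix. -/
def inflNorm {α β : Type*} [Fintype α] [Fintype β] (M : Matrix α β ℝ) : ℝ :=
  ⨆ i, ∑ j, |M i j|

/-- The entrywise maximum absolute value of a real matrix. -/
def entryMaxNorm {α β : Type*} [Fintype α] [Fintype β] (M : Matrix α β ℝ) : ℝ :=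
  ⨆ i, ⨆ j, |M i j|

/-- The entrywise `ℓ₁` norm of a real matrix. -/
def matL1Norm {α β : Type*} [Fintype α] [Fintype β] (M : Matrix α β ℝ) : ℝ :=
  ∑ i, ∑ j, |M i j|

/-- The squared Frobenius norm of a real matrix. -/
def frobSq {α β : Type*} [Fintype α] [Fintype β] (M : Matrix α β ℝ) : ℝ :=
  ∑ i, ∑ j, (M i j) ^ 2

/-- The `ℓ∞` norm of a real vector. -/
def vecMax {α : Type*} [Fintype α] (g : α → ℝ) : ℝ := ⨆ i, |g i|

/-- The `ℓ₁` norm of a real vector. -/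
def vecL1 {α : Type*} [Fintype α] (g : α → ℝ) : ℝ := ∑ i, |g i|

/-- The squared Euclidean norm of a real vector. -/
def vecL2sq {α : Type*} [Fintype α] (g : α → ℝ) : ℝ := ∑ i, (g i) ^ 2

/-- The principal submatrix with rows and columns in the index set `S`. -/
def subSq {r : Type*} (M : Matrix r r ℝ) (S : Finset r) : Matrix S S ℝ :=
  M.submatrix Subtype.val Subtype.val

/-- The submatrix with rows in `S` and columns in `S'`. -/
def subRC {r : Type*} (M : Matrix r r ℝ) (S S' : Finset r) : Matrix S S' ℝ :=
  M.submatrix Subtype.val Subtype.val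

/-- The Lasso objective for a single column. -/
def lassoObjC {ι α : Type*} [Fintype ι] [Fintype α]
    (T : ℕ) (lam : ℝ) (X : Matrix ι α ℝ) (y : ι → ℝ) (ψ : α → ℝ) : ℝ :=
  (2 * (T : ℝ))⁻¹ * vecL2sq (fun t => y t - (X *ᵥ ψ) t) + lam * vecL1 ψ

end

open scoped Matrix.Norms.L2Operator

lemma specNorm_eq_l2_opNorm {α β : Type*} [Fintype α] [Fintype β] [DecidableEq β]
    (M : Matrix α β ℝ) : specNorm M = ‖M‖ := rfl

namespace Matrix

section Summation

variable {ι R l m n p : Type*} [Fintype m] [Fintype n]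
  [TopologicalSpace R] [Semiring R] [IsTopologicalSemiring R] [T2Space R]

lemma mul_tsum_mul (X : Matrix l m R) (Y : Matrix n p R) {f : ι → Matrix m n R}
    (hf : Summable f) : X * (∑' i, f i) * Y = ∑' i, X * f i * Y :=
  (hf.hasSum.map ((addMonoidHomMulRight Y).comp (addMonoidHomMulLeft X))
    ((continuous_const.matrix_mul continuous_id).matrix_mul continuous_const)).tsum_eq.symm

end Summation

lemma fromBlocks_eq_fromRows_mul_mul_transpose_add {R m n : Type*} [CommSemiring R]
    [Fintype n] [DecidableEq m] [DecidableEq n]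
    (Q : Matrix n n R) (K : Matrix m n R) (c : R) :
    fromBlocks Q (Q * Kᵀ) (K * Q) (K * Q * Kᵀ + c • 1) =
      fromRows 1 K * Q * (fromRows 1 K)ᵀ + diagonal (Sum.elim 0 fun _ => c) := by
  rw [← fromBlocks_diagonal, ← smul_one_eq_diagonal, transpose_fromRows,
    fromRows_mul, fromRows_mul_fromCols, fromBlocks_add]
  simp

variable {𝕜 : Type*} [RCLike 𝕜] {l m n : Type*} [Fintype l] [Fintype m] [Fintype n]

lemma l2_opNorm_fromRows_sq_le [DecidableEq l] (X : Matrix m l 𝕜) (Y : Matrix n l 𝕜) :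
    ‖fromRows X Y‖ ^ 2 ≤ ‖X‖ ^ 2 + ‖Y‖ ^ 2 := by
  calc ‖fromRows X Y‖ ^ 2 = ‖Xᴴ * X + Yᴴ * Y‖ := by
        rw [sq, ← l2_opNorm_conjTranspose_mul_self,
          conjTranspose_fromRows_eq_fromCols_conjTranspose, fromCols_mul_fromRows]
    _ ≤ ‖Xᴴ * X‖ + ‖Yᴴ * Y‖ := norm_add_le _ _
    _ = ‖X‖ ^ 2 + ‖Y‖ ^ 2 := by rw [l2_opNorm_conjTranspose_mul_self,
        l2_opNorm_conjTranspose_mul_self, sq, sq]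

lemma l2_opNorm_diagonal_le [DecidableEq n] {v : n → 𝕜} {r : ℝ} (hr : 0 ≤ r)
    (hv : ∀ i, ‖v i‖ ≤ r) : ‖diagonal v‖ ≤ r := by
  rw [l2_opNorm_diagonal]
  exact (pi_norm_le_iff_of_nonneg hr).mpr hv

lemma l2_opNorm_mul_transpose_self [DecidableEq l] [DecidableEq m] (Y : Matrix l m ℝ) :
    ‖Y * Yᵀ‖ = ‖Y‖ ^ 2 := by
  rw [← conjTranspose_eq_transpose_of_trivial]
  nth_rewrite 1 [← conjTranspose_conjTranspose Y]
  rw [l2_opNorm_conjTranspose_mul_self, l2_opNorm_conjTranspose, sq]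

end Matrix

open Matrix

def noiseCov {n m : Type*} [Fintype m] [DecidableEq n] (σw σv : ℝ) (B : Matrix n m ℝ) :
    Matrix n n ℝ :=
  σw ^ 2 • 1 + σv ^ 2 • (B * Bᵀ)

section NoiseCov

variable {l n m : Type*} [Fintype l] [Fintype n] [Fintype m]
  [DecidableEq l] [DecidableEq m] [DecidableEq n] {σw σv a ρ : ℝ} {B : Matrix n m ℝ}

lemma norm_mul_noiseCov_mul_transpose_le {X : Matrix l n ℝ} (hX : ‖X‖ ^ 2 ≤ a)
    (hXB : ‖X * B‖ ^ 2 ≤ a) : ‖X * noiseCov σw σv B * Xᵀ‖ ≤ (σw ^ 2 + σv ^ 2) * a := by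
  have hsplit :
      X * noiseCov σw σv B * Xᵀ = σw ^ 2 • (X * Xᵀ) + σv ^ 2 • (X * B * (X * B)ᵀ) := by
    simp [noiseCov, Matrix.mul_add, Matrix.add_mul, Matrix.transpose_mul, Matrix.mul_assoc]
  calc ‖X * noiseCov σw σv B * Xᵀ‖
        ≤ ‖σw ^ 2 • (X * Xᵀ)‖ + ‖σv ^ 2 • (X * B * (X * B)ᵀ)‖ := hsplit ▸ norm_add_le _ _
    _ = σw ^ 2 * ‖X‖ ^ 2 + σv ^ 2 * ‖X * B‖ ^ 2 := by
      rw [norm_smul, norm_smul, l2_opNorm_mul_transpose_self, l2_opNorm_mul_transpose_self,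
        Real.norm_of_nonneg (sq_nonneg _), Real.norm_of_nonneg (sq_nonneg _)]
    _ ≤ (σw ^ 2 + σv ^ 2) * a := by nlinarith [sq_nonneg σw, sq_nonneg σv]

variable {G : ℕ → Matrix l n ℝ}
  (hG : ∀ τ, ‖G τ‖ ^ 2 ≤ a * ρ ^ τ) (hGB : ∀ τ, ‖G τ * B‖ ^ 2 ≤ a * ρ ^ τ)
include hG hGB

lemma norm_mul_noiseCov_mul_transpose_le_geometric (τ : ℕ) :
    ‖G τ * noiseCov σw σv B * (G τ)ᵀ‖ ≤ (σw ^ 2 + σv ^ 2) * a * ρ ^ τ :=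
  (norm_mul_noiseCov_mul_transpose_le (hG τ) (hGB τ)).trans_eq (mul_assoc _ _ _).symm

variable (hρ0 : 0 ≤ ρ) (hρ1 : ρ < 1)
include hρ0 hρ1

lemma summable_mul_noiseCov_mul_transpose :
    Summable fun τ => G τ * noiseCov σw σv B * (G τ)ᵀ :=
  .of_norm_bounded ((summable_geometric_of_lt_one hρ0 hρ1).mul_left _)
    (norm_mul_noiseCov_mul_transpose_le_geometric hG hGB)

lemma norm_tsum_mul_noiseCov_mul_transpose_le :
    ‖∑' τ, G τ * noiseCov σw σv B * (G τ)ᵀ‖ ≤ (σw ^ 2 + σv ^ 2) * a / (1 - ρ) :=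
  tsum_of_norm_bounded ((hasSum_geometric_of_lt_one hρ0 hρ1).mul_left _)
    (norm_mul_noiseCov_mul_transpose_le_geometric hG hGB)

end NoiseCov

lemma sq_le_mul_pow_of_le_mul_pow {x C ρ : ℝ} {τ : ℕ} (hρ0 : 0 ≤ ρ) (hρ1 : ρ ≤ 1) (hx : 0 ≤ x)
    (h : x ≤ C * ρ ^ τ) : x ^ 2 ≤ C ^ 2 * ρ ^ τ :=
  calc x ^ 2 ≤ (C * ρ ^ τ) ^ 2 := pow_le_pow_left₀ hx h 2
    _ = C ^ 2 * (ρ ^ τ) ^ 2 := mul_pow _ _ _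
    _ ≤ C ^ 2 * ρ ^ τ := by
      gcongr
      exact pow_le_of_le_one (pow_nonneg hρ0 τ) (pow_le_one₀ hρ0 hρ1) two_ne_zero

theorem statement_13_general (n m : ℕ)
    (A : Matrix (Fin n) (Fin n) ℝ) (B : Matrix (Fin n) (Fin m) ℝ)
    (K : Matrix (Fin m) (Fin n) ℝ)
    (η σw σv C ρ : ℝ)
    (hσwη : σw ^ 2 ≤ 5 * η ^ 2) (hσvη : σv ^ 2 ≤ 5 * η ^ 2)
    (hC : 1 ≤ C) (hρ0 : 0 ≤ ρ) (hρ1 : ρ < 1)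
    (hspec1 : ∀ τ : ℕ, specNorm ((A + B * K) ^ τ) ≤ C * ρ ^ τ)
    (hspec2 : ∀ τ : ℕ, specNorm ((A + B * K) ^ τ * B) ≤ C * ρ ^ τ)
    (hspec3 : ∀ τ : ℕ, specNorm (K * (A + B * K) ^ τ) ≤ C * ρ ^ τ)
    (hspec4 : ∀ τ : ℕ, specNorm (K * (A + B * K) ^ τ * B) ≤ C * ρ ^ τ)
    (Qstar : Matrix (Fin n) (Fin n) ℝ)
    (hQ : Qstar = ∑' τ : ℕ, (A + B * K) ^ τ *
      (σw ^ 2 • (1 : Matrix (Fin n) (Fin n) ℝ) + σv ^ 2 • (B * Bᵀ)) * ((A + B * K)ᵀ) ^ τ)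
    (Mstar : Matrix (Fin n ⊕ Fin m) (Fin n ⊕ Fin m) ℝ)
    (hMstar : Mstar = Matrix.fromBlocks Qstar (Qstar * Kᵀ) (K * Qstar)
      (K * Qstar * Kᵀ + σv ^ 2 • (1 : Matrix (Fin m) (Fin m) ℝ))) :
    specNorm Mstar ≤ 85 * C ^ 2 * η ^ 2 / (1 - ρ) := by
  simp only [specNorm_eq_l2_opNorm] at hspec1 hspec2 hspec3 hspec4 ⊢
  set P := A + B * K
  set E : Matrix (Fin n ⊕ Fin m) (Fin n) ℝ := fromRows 1 K
  have hsq {x : ℝ} {τ : ℕ} (hx : 0 ≤ x) (h : x ≤ C * ρ ^ τ) : x ^ 2 ≤ C ^ 2 * ρ ^ τ :=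
    sq_le_mul_pow_of_le_mul_pow hρ0 hρ1.le hx h
  have hstack (τ : ℕ) : ‖E * P ^ τ‖ ^ 2 ≤ 2 * C ^ 2 * ρ ^ τ ∧
      ‖E * P ^ τ * B‖ ^ 2 ≤ 2 * C ^ 2 * ρ ^ τ := by
    simp only [E, fromRows_mul, Matrix.one_mul]
    constructor
    · linarith [l2_opNorm_fromRows_sq_le (P ^ τ) (K * P ^ τ),
        hsq (norm_nonneg _) (hspec1 τ), hsq (norm_nonneg _) (hspec3 τ)]
    · linarith [l2_opNorm_fromRows_sq_le (P ^ τ * B) (K * P ^ τ * B),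
        hsq (norm_nonneg _) (hspec2 τ), hsq (norm_nonneg _) (hspec4 τ)]
  have hQ' : Qstar = ∑' τ, P ^ τ * noiseCov σw σv B * (P ^ τ)ᵀ := by
    simp only [hQ, transpose_pow, noiseCov]
  have hQsum : Summable fun τ => P ^ τ * noiseCov σw σv B * (P ^ τ)ᵀ :=
    summable_mul_noiseCov_mul_transpose (fun τ => hsq (norm_nonneg _) (hspec1 τ))
      (fun τ => hsq (norm_nonneg _) (hspec2 τ)) hρ0 hρ1
  have hEQE : ‖E * Qstar * Eᵀ‖ ≤ (σw ^ 2 + σv ^ 2) * (2 * C ^ 2) / (1 - ρ) := by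
    rw [hQ', mul_tsum_mul _ _ hQsum]
    convert norm_tsum_mul_noiseCov_mul_transpose_le
      (fun τ => (hstack τ).1) (fun τ => (hstack τ).2) hρ0 hρ1 using 3
    simp only [transpose_mul, Matrix.mul_assoc]
  have ht : 1 ≤ C ^ 2 / (1 - ρ) := by
    rw [one_le_div (by linarith)]; nlinarith
  rw [hMstar, fromBlocks_eq_fromRows_mul_mul_transpose_add]
  calc _ ≤ (σw ^ 2 + σv ^ 2) * (2 * C ^ 2) / (1 - ρ) + σv ^ 2 :=
        norm_add_le_of_le hEQE <|
          l2_opNorm_diagonal_le (sq_nonneg σv) fun i => by cases i <;> simp [sq_nonneg]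
    _ = 2 * (σw ^ 2 + σv ^ 2) * (C ^ 2 / (1 - ρ)) + σv ^ 2 := by ring
    _ ≤ 85 * η ^ 2 * (C ^ 2 / (1 - ρ)) := by nlinarith [sq_nonneg η]
    _ = 85 * C ^ 2 * η ^ 2 / (1 - ρ) := by ring

/-- Bound on the spectral norm of the stationary covariance `M*`:
`|||M*||| ≤ 85 C² η²/(1−ρ)`. -/
theorem statement_13 (n m : ℕ) (hn : 1 ≤ n) (hm : 1 ≤ m)
    (A : Matrix (Fin n) (Fin n) ℝ) (B : Matrix (Fin n) (Fin m) ℝ)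
    (K : Matrix (Fin m) (Fin n) ℝ)
    (η σw σv C ρ : ℝ) (hη : 0 < η)
    (hσw0 : 0 ≤ σw) (hσw1 : σw ≤ 1) (hσv0 : 0 ≤ σv) (hσv1 : σv ≤ 1)
    (hσwη : σw ^ 2 ≤ 5 * η ^ 2) (hσvη : σv ^ 2 ≤ 5 * η ^ 2)
    (hC : 1 ≤ C) (hρ0 : 0 ≤ ρ) (hρ1 : ρ < 1)
    (hspec1 : ∀ τ : ℕ, specNorm ((A + B * K) ^ τ) ≤ C * ρ ^ τ)
    (hspec2 : ∀ τ : ℕ, specNorm ((A + B * K) ^ τ * B) ≤ C * ρ ^ τ)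
    (hspec3 : ∀ τ : ℕ, specNorm (K * (A + B * K) ^ τ) ≤ C * ρ ^ τ)
    (hspec4 : ∀ τ : ℕ, specNorm (K * (A + B * K) ^ τ * B) ≤ C * ρ ^ τ)
    (Qstar : Matrix (Fin n) (Fin n) ℝ)
    (hQ : Qstar = ∑' τ : ℕ, (A + B * K) ^ τ *
      (σw ^ 2 • (1 : Matrix (Fin n) (Fin n) ℝ) + σv ^ 2 • (B * Bᵀ)) * ((A + B * K)ᵀ) ^ τ)
    (Mstar : Matrix (Fin n ⊕ Fin m) (Fin n ⊕ Fin m) ℝ)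
    (hMstar : Mstar = Matrix.fromBlocks Qstar (Qstar * Kᵀ) (K * Qstar)
      (K * Qstar * Kᵀ + σv ^ 2 • (1 : Matrix (Fin m) (Fin m) ℝ))) :
    specNorm Mstar ≤ 85 * C ^ 2 * η ^ 2 / (1 - ρ) :=
  statement_13_general n m A B K η σw σv C ρ hσwη hσvη hC hρ0 hρ1 hspec1 hspec2 hspec3 hspec4 Qstar
    hQ Mstar hMstar
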